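/- Define the walk polynomial of a tournament Γ of degree d as Walk_{Γ,d}(x) = x^d + Σ_{i=1}^{d} (𝟏ᵀA(Γ)^{i-1}𝟏)·x^{d-i}. Then for any two tournaments Γ₁, Γ₂ and their join Γ = Γ₁ ⊕ Γ₂ (all arcs from Γ₂ to Γ₁), Walk_{Γ,d}(x) = Walk_{Γ₁,d}(x)·Walk_{Γ₂,d}(x) as polynomials, truncated appropriately: the coefficient of x^{d-k} in the product equals 𝟏ᵀA(Γ)^{k-1}𝟏 for each k ∈ {1,...,d}. -/

import Mathlib

open Polynomial

/-- A `{0,1}` matrix is the adjacency matrix of a tournament: zero diagonal and,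
for each pair of distinct indices, exactly one of the two opposite arcs present. -/
def IsTournament {V : Type*} (A : Matrix V V ℤ) : Prop :=
  (∀ i, A i i = 0) ∧
    ∀ i j, i ≠ j → (A i j = 1 ∧ A j i = 0) ∨ (A i j = 0 ∧ A j i = 1)

/-- The walk polynomial of a tournament with adjacency matrix `A`, of degree `d`:
`Walk_{Γ,d}(x) = x^d + Σ_{i=1}^d (𝟏ᵀA^{i-1}𝟏)·x^{d-i}`. -/
noncomputable def walkPoly {V : Type*} [Fintype V] [DecidableEq V] (A : Matrix V V ℤ) (d : ℕ) :
    Polynomial ℤ :=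
  X ^ d + ∑ i ∈ Finset.Icc 1 d, C (∑ u, ∑ v, (A ^ (i - 1)) u v) * X ^ (d - i)

/-!
Let `W_A(x) = 1 + ∑ₙ (𝟏ᵀAⁿ𝟏) xⁿ⁺¹` be the generating series of walks. The powers of the join
`M = [[A₁, 0], [J, A₂]]` stay block lower triangular, with lower-left block
`∑_{i<n} A₂ⁱ J A₁ⁿ⁻¹⁻ⁱ`, and since `J = 𝟏𝟏ᵀ` we have `𝟏ᵀ(B J C)𝟏 = (𝟏ᵀB𝟏)(𝟏ᵀC𝟏)`. Hence
`𝟏ᵀMⁿ𝟏 = 𝟏ᵀA₁ⁿ𝟏 + 𝟏ᵀA₂ⁿ𝟏 + ∑_{i<n} (𝟏ᵀA₂ⁱ𝟏)(𝟏ᵀA₁ⁿ⁻¹⁻ⁱ𝟏)`, which says exactly that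
`W_M = W_{A₁} W_{A₂}` as power series. Finally `Walk_{A,d}` is the reversal `x^d W_A(1/x)` of the
truncation of `W_A` at degree `d`, so the top `d + 1` coefficients of `Walk_{A₁,d} Walk_{A₂,d}`
are the first `d + 1` coefficients of `W_{A₁} W_{A₂}`.
-/

open Finset

namespace Matrix

variable {R T U V W : Type*} [Fintype T] [Fintype U] [Fintype V] [Fintype W]

def entrySum [AddCommMonoid R] (M : Matrix V W R) : R := ∑ v, ∑ w, M v w

@[simp]
theorem entrySum_zero [AddCommMonoid R] : entrySum (0 : Matrix V W R) = 0 := by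
  simp [entrySum]

theorem entrySum_sum [AddCommMonoid R] {ι : Type*} (s : Finset ι) (M : ι → Matrix V W R) :
    entrySum (∑ i ∈ s, M i) = ∑ i ∈ s, entrySum (M i) := by
  simp only [entrySum, sum_apply]
  rw [Finset.sum_comm (s := s)]
  exact sum_congr rfl fun _ _ => Finset.sum_comm

theorem entrySum_fromBlocks [AddCommMonoid R] (A : Matrix V V R) (B : Matrix V W R)
    (C : Matrix W V R) (D : Matrix W W R) :
    entrySum (fromBlocks A B C D) = entrySum A + entrySum B + entrySum C + entrySum D := by
  simp only [entrySum, Fintype.sum_sum_type, fromBlocks_apply₁₁, fromBlocks_apply₁₂,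
    fromBlocks_apply₂₁, fromBlocks_apply₂₂, sum_add_distrib]
  abel

theorem entrySum_mul_of_one_mul [NonAssocSemiring R] (B : Matrix T U R) (C : Matrix V W R) :
    entrySum (B * (of fun _ _ => 1 : Matrix U V R) * C) = entrySum B * entrySum C := by
  have entry (t : T) (w : W) :
      (B * (of fun _ _ => 1 : Matrix U V R) * C) t w = (∑ u, B t u) * ∑ v, C v w := by
    simp only [mul_apply, of_apply, mul_one, ← mul_sum]
  simp only [entrySum, entry, ← sum_mul_sum]
  rw [Finset.sum_comm (f := fun v w => C v w)]

variable [DecidableEq V] [DecidableEq W]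

theorem fromBlocks_zero₁₂_pow [Semiring R] (A : Matrix V V R) (C : Matrix W V R)
    (D : Matrix W W R) (n : ℕ) :
    fromBlocks A 0 C D ^ n =
      fromBlocks (A ^ n) 0 (∑ i ∈ range n, D ^ i * C * A ^ (n - 1 - i)) (D ^ n) := by
  induction n with
  | zero => simp [fromBlocks_one]
  | succ n ih =>
    rw [pow_succ, ih, fromBlocks_multiply, sum_range_succ, Matrix.sum_mul]
    simp only [Matrix.mul_zero, Matrix.zero_mul, add_zero, zero_add, ← pow_succ,
      Nat.add_sub_cancel, Nat.sub_self, pow_zero, Matrix.mul_one]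
    congr 2
    refine sum_congr rfl fun i hi => ?_
    rw [Matrix.mul_assoc, ← pow_succ]
    congr 2
    have := mem_range.1 hi
    omega

theorem entrySum_fromBlocks_zero_of_one_pow [Semiring R] (A₁ : Matrix V V R)
    (A₂ : Matrix W W R) (n : ℕ) :
    entrySum (fromBlocks A₁ 0 (of fun _ _ => 1) A₂ ^ n) =
      entrySum (A₁ ^ n) + entrySum (A₂ ^ n) +
        ∑ i ∈ range n, entrySum (A₂ ^ i) * entrySum (A₁ ^ (n - 1 - i)) := by
  rw [fromBlocks_zero₁₂_pow, entrySum_fromBlocks, entrySum_sum]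
  simp only [entrySum_mul_of_one_mul, entrySum_zero, add_zero]
  abel

end Matrix

namespace PowerSeries

theorem coeff_X_mul_mk_mul_mk {R : Type*} [CommSemiring R] (f g : ℕ → R) (n : ℕ) :
    coeff n (X * (mk f * mk g)) = ∑ i ∈ range n, f i * g (n - 1 - i) := by
  cases n with
  | zero => simp
  | succ n =>
    rw [coeff_succ_X_mul, coeff_mul,
      Finset.Nat.sum_antidiagonal_eq_sum_range_succ (fun i j => coeff i (mk f) * coeff j (mk g))]
    simp only [coeff_mk, Nat.add_sub_cancel]

theorem reflect_trunc {R : Type*} [Semiring R] (N n : ℕ) (φ : PowerSeries R) :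
    (trunc n φ).reflect N =
      ∑ i ∈ range n, Polynomial.C (coeff i φ) * Polynomial.X ^ revAt N i := by
  induction n with
  | zero => simp
  | succ n ih =>
    rw [trunc_succ, reflect_add, ih, ← C_mul_X_pow_eq_monomial, reflect_C_mul_X_pow,
      sum_range_succ]

end PowerSeries

open Matrix

section WalkSeries

variable {R V W : Type*} [Fintype V] [Fintype W] [DecidableEq V] [DecidableEq W]

noncomputable def walkSeries [Semiring R] (A : Matrix V V R) : PowerSeries R :=
  1 + PowerSeries.X * PowerSeries.mk fun n => entrySum (A ^ n)

@[simp]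
theorem coeff_zero_walkSeries [Semiring R] (A : Matrix V V R) :
    PowerSeries.coeff 0 (walkSeries A) = 1 := by
  simp [walkSeries]

@[simp]
theorem coeff_succ_walkSeries [Semiring R] (A : Matrix V V R) (n : ℕ) :
    PowerSeries.coeff (n + 1) (walkSeries A) = entrySum (A ^ n) := by
  simp [walkSeries, PowerSeries.coeff_succ_X_mul]

theorem walkSeries_fromBlocks_zero_of_one [CommSemiring R] (A₁ : Matrix V V R)
    (A₂ : Matrix W W R) :
    walkSeries (fromBlocks A₁ 0 (of fun _ _ => 1) A₂) = walkSeries A₁ * walkSeries A₂ := by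
  have h : PowerSeries.mk (fun n => entrySum (fromBlocks A₁ 0 (of fun _ _ => 1) A₂ ^ n)) =
      PowerSeries.mk (fun n => entrySum (A₁ ^ n)) + PowerSeries.mk (fun n => entrySum (A₂ ^ n)) +
        PowerSeries.X * (PowerSeries.mk (fun n => entrySum (A₂ ^ n)) *
          PowerSeries.mk (fun n => entrySum (A₁ ^ n))) := by
    ext n
    simp only [map_add, PowerSeries.coeff_mk, PowerSeries.coeff_X_mul_mk_mul_mk,
      entrySum_fromBlocks_zero_of_one_pow]
  simp only [walkSeries, h]
  ring

theorem walkPoly_eq_reflect_trunc_walkSeries (A : Matrix V V ℤ) (d : ℕ) :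
    walkPoly A d = (PowerSeries.trunc (d + 1) (walkSeries A)).reflect d := by
  rw [PowerSeries.reflect_trunc, sum_range_succ', walkPoly, ← Finset.Ico_add_one_right_eq_Icc,
    sum_Ico_eq_sum_range, add_comm]
  simp only [coeff_zero_walkSeries, coeff_succ_walkSeries, map_one, one_mul, revAt_zero,
    Nat.add_sub_cancel, Nat.add_sub_cancel_left]
  congr 1
  refine sum_congr rfl fun k hk => ?_
  rw [revAt_le (by have := mem_range.1 hk; omega), add_comm 1 k]
  rfl

theorem coeff_walkPoly_mul_walkPoly (A : Matrix V V ℤ) (B : Matrix W W ℤ) {d k : ℕ}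
    (hk : k ≤ d) :
    (walkPoly A d * walkPoly B d).coeff (2 * d - k) =
      PowerSeries.coeff k (walkSeries A * walkSeries B) := by
  have hdeg (φ : PowerSeries ℤ) : (PowerSeries.trunc (d + 1) φ).natDegree ≤ d :=
    Nat.lt_succ_iff.mp (PowerSeries.natDegree_trunc_lt φ d)
  rw [walkPoly_eq_reflect_trunc_walkSeries, walkPoly_eq_reflect_trunc_walkSeries,
    ← reflect_mul _ _ (hdeg _) (hdeg _), coeff_reflect, two_mul, revAt_le (by omega),
    show d + d - (d + d - k) = k by omega,
    PowerSeries.coeff_mul_eq_coeff_trunc_mul_trunc _ _ (Nat.lt_succ_of_le hk),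
    ← Polynomial.coe_mul, Polynomial.coeff_coe]

end WalkSeries

theorem stmt13_general (m l : ℕ) (A₁ : Matrix (Fin m) (Fin m) ℤ) (A₂ : Matrix (Fin l) (Fin l) ℤ)
    (d : ℕ) :
    ∀ k, 1 ≤ k → k ≤ d →
      (walkPoly A₁ d * walkPoly A₂ d).coeff (2 * d - k) =
        ∑ u, ∑ v, ((Matrix.fromBlocks A₁ 0 (Matrix.of fun _ _ => 1) A₂) ^ (k - 1)) u v := by
  intro k hk hkd
  obtain ⟨n, rfl⟩ := Nat.exists_eq_add_of_le' hk
  rw [coeff_walkPoly_mul_walkPoly A₁ A₂ hkd, ← walkSeries_fromBlocks_zero_of_one,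
    coeff_succ_walkSeries, Nat.add_sub_cancel]
  rfl

/-- For tournaments `Γ₁, Γ₂` and their join `Γ = Γ₁ ⊕ Γ₂`, the walk
polynomial of `Γ` is the (suitably truncated) product of those of `Γ₁` and `Γ₂`:
for each `k ∈ {1,…,d}`, the coefficient of `x^{2d-k}` in
`Walk_{Γ₁,d}·Walk_{Γ₂,d}` equals `𝟏ᵀA(Γ)^{k-1}𝟏`. -/
theorem stmt13 (m l : ℕ) (A₁ : Matrix (Fin m) (Fin m) ℤ) (A₂ : Matrix (Fin l) (Fin l) ℤ)
    (h₁ : IsTournament A₁) (h₂ : IsTournament A₂) (d : ℕ) :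
    ∀ k, 1 ≤ k → k ≤ d →
      (walkPoly A₁ d * walkPoly A₂ d).coeff (2 * d - k) =
        ∑ u, ∑ v, ((Matrix.fromBlocks A₁ 0 (Matrix.of fun _ _ => 1) A₂) ^ (k - 1)) u v :=
  stmt13_general m l A₁ A₂ d
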